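/- Let d ≥ 2 and let a₁,…,a_d be indeterminates. The generic monic polynomial of degree d, f(x) = x^d + a₁x^{d−1} + ⋯ + a_d, is indecomposable as a one-variable polynomial in x over the rational function field ℚ(a₁,…,a_d). -/

import Mathlib

open Polynomial

/-- A one-variable polynomial over a field is indecomposable if it is non-constant and
cannot be written as `u ∘ g` with both `u` and `g` of degree at least 2. -/
def IndecomposablePoly {K : Type*} [Field K] (f : K[X]) : Prop :=
  0 < f.natDegree ∧
    ¬ ∃ u g : K[X], 2 ≤ u.natDegree ∧ 2 ≤ g.natDegree ∧ f = u.comp g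

/-- The field `ℚ(a₁,…,a_d)` of rational functions in `d` indeterminates over `ℚ`. -/
abbrev GenericCoeffField (d : ℕ) : Type :=
  FractionRing (MvPolynomial (Fin d) ℚ)

/-- The generic monic polynomial of degree `d`:
`f(x) = x^d + a₁x^{d-1} + ⋯ + a_d ∈ ℚ(a₁,…,a_d)[x]`,
where `a_{i+1}` (for `i : Fin d`) is the coefficient of `x^{d-1-i}`. -/
noncomputable def genericMonic (d : ℕ) : Polynomial (GenericCoeffField d) :=
  Polynomial.X ^ d +
    ∑ i : Fin d,
      Polynomial.C
          (algebraMap (MvPolynomial (Fin d) ℚ) (GenericCoeffField d) (MvPolynomial.X i)) *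
        Polynomial.X ^ (d - 1 - (i : ℕ))

/-! If `f = u ∘ g` with `deg u = m ≥ 2` and `deg g = n ≥ 2`, an affine change of variables
makes `u` and `g` monic with `g(0) = 0`. Then every coefficient of `f` is a polynomial over `ℚ`
in the `m + n - 1` remaining coefficients of `u` and `g`. Since `a₁, …, a_d` are algebraically
independent, the `ℚ`-algebra they generate has transcendence degree `d = mn`, while one generated
by `m + n - 1` elements has transcendence degree at most `m + n - 1 < mn`. -/

theorem AlgebraicIndependent.card_le_of_forall_mem_adjoin {R A ι κ : Type*} [CommRing R]
    [IsDomain R] [CommRing A] [Algebra R A] [Fintype ι] [Fintype κ] {x : ι → A}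
    (hx : AlgebraicIndependent R x) {t : κ → A}
    (hxt : ∀ i, x i ∈ Algebra.adjoin R (Set.range t)) :
    Fintype.card ι ≤ Fintype.card κ := by
  simp_rw [Algebra.adjoin_range_eq_range_aeval] at hxt
  set φ := MvPolynomial.aeval (R := R) t
  have hx' : AlgebraicIndependent R fun i => (⟨x i, hxt i⟩ : φ.range) :=
    hx.of_comp φ.range.val
  have h_le_trdeg := hx'.lift_cardinalMk_le_trdeg
  have h_trdeg_le := lift_trdeg_le_of_surjective φ.rangeRestrict φ.rangeRestrict_surjective
  rw [MvPolynomial.trdeg_of_isDomain] at h_trdeg_le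
  simp only [Cardinal.mk_fintype, Cardinal.lift_natCast, Cardinal.nat_le_lift_iff,
    Cardinal.lift_le_nat_iff] at h_le_trdeg h_trdeg_le
  exact_mod_cast h_le_trdeg.trans h_trdeg_le

namespace Polynomial

section Coefficients

variable {R A : Type*} [CommSemiring R] [CommSemiring A] [Algebra R A]

theorem Monic.coeff_mem_of_forall_lt {S : Subsemiring A} {u : A[X]} (hu : u.Monic)
    (h : ∀ k < u.natDegree, u.coeff k ∈ S) (k : ℕ) : u.coeff k ∈ S := by
  rcases lt_trichotomy k u.natDegree with hk | rfl | hk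
  · exact h k hk
  · rw [hu.coeff_natDegree]; exact S.one_mem
  · rw [coeff_eq_zero_of_natDegree_lt hk]; exact S.zero_mem

theorem coeff_comp_mem {S : Subsemiring A} {u g : A[X]} (hu : ∀ k, u.coeff k ∈ S)
    (hg : ∀ k, g.coeff k ∈ S) (k : ℕ) : (u.comp g).coeff k ∈ S := by
  obtain ⟨U, rfl⟩ := (mem_lifts u).1 <| (lifts_iff_coeff_lifts (f := S.subtype) u).2
    fun k => ⟨⟨_, hu k⟩, rfl⟩
  obtain ⟨G, rfl⟩ := (mem_lifts g).1 <| (lifts_iff_coeff_lifts (f := S.subtype) g).2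
    fun k => ⟨⟨_, hg k⟩, rfl⟩
  rw [← map_comp, coeff_map]
  exact ((U.comp G).coeff k).2

def lowerCoeffs (u g : A[X]) : Fin u.natDegree ⊕ Fin (g.natDegree - 1) → A :=
  Sum.elim (fun i => u.coeff i) (fun i => g.coeff (i + 1))

theorem coeff_comp_mem_adjoin_lowerCoeffs {u g : A[X]} (hu : u.Monic) (hg : g.Monic)
    (hg0 : g.coeff 0 = 0) (k : ℕ) :
    (u.comp g).coeff k ∈ Algebra.adjoin R (Set.range (lowerCoeffs u g)) := by
  set S := Algebra.adjoin R (Set.range (lowerCoeffs u g))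
  refine coeff_comp_mem (S := S.toSubsemiring)
    (hu.coeff_mem_of_forall_lt fun i hi => ?_) (hg.coeff_mem_of_forall_lt fun i hi => ?_) k
  · exact Algebra.subset_adjoin ⟨.inl ⟨i, hi⟩, rfl⟩
  · rcases i with _ | j
    · rw [hg0]; exact S.zero_mem
    · exact Algebra.subset_adjoin ⟨.inr ⟨j, by omega⟩, rfl⟩

end Coefficients

section Field

variable {K : Type*} [Field K]

theorem exists_monic_eq_linear_comp {g : K[X]} (hg : 0 < g.natDegree) :
    ∃ (a b : K) (g₁ : K[X]), a ≠ 0 ∧ g₁.Monic ∧ g₁.coeff 0 = 0 ∧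
      g₁.natDegree = g.natDegree ∧ g = (C a * X + C b).comp g₁ := by
  have ha : g.leadingCoeff ≠ 0 := leadingCoeff_ne_zero.2 (ne_zero_of_natDegree_gt hg)
  have hlc : (g - C (g.coeff 0)).leadingCoeff = g.leadingCoeff :=
    leadingCoeff_sub_of_degree_lt (degree_C_le.trans_lt (natDegree_pos_iff_degree_pos.1 hg))
  refine ⟨g.leadingCoeff, g.coeff 0, C g.leadingCoeff⁻¹ * (g - C (g.coeff 0)), ha,
    ?_, ?_, ?_, ?_⟩
  · rw [Monic, leadingCoeff_mul, leadingCoeff_C, hlc, inv_mul_cancel₀ ha]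
  · simp
  · rw [natDegree_C_mul (inv_ne_zero ha), natDegree_sub_C]
  · rw [add_comp, mul_comp, C_comp, X_comp, C_comp, ← mul_assoc, ← C_mul, mul_inv_cancel₀ ha,
      C_1, one_mul, sub_add_cancel]

theorem Monic.exists_monic_comp_eq {u g : K[X]} (hug : (u.comp g).Monic)
    (hg : 0 < g.natDegree) :
    ∃ u₁ g₁ : K[X], u₁.Monic ∧ g₁.Monic ∧ g₁.coeff 0 = 0 ∧ u₁.natDegree = u.natDegree ∧
      g₁.natDegree = g.natDegree ∧ u₁.comp g₁ = u.comp g := by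
  obtain ⟨a, b, g₁, ha, hg₁, hg₁0, hdeg, rfl⟩ := exists_monic_eq_linear_comp hg
  have hu₁ : (u.comp (C a * X + C b)).natDegree = u.natDegree := by
    rw [natDegree_comp, natDegree_linear ha, mul_one]
  refine ⟨u.comp (C a * X + C b), g₁, ?_, hg₁, hg₁0, hu₁, hdeg, comp_assoc _ _ _⟩
  have hlc := leadingCoeff_comp (p := u.comp (C a * X + C b)) (hdeg ▸ hg).ne'
  rwa [comp_assoc, hug.leadingCoeff, hg₁.leadingCoeff, one_pow, mul_one, eq_comm] at hlc

end Field

end Polynomial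

theorem indecomposablePoly_of_algebraicIndependent_coeff {R K : Type*} [CommRing R]
    [IsDomain R] [Field K] [Algebra R K] {f : K[X]} (hf : f.Monic) (hf0 : 0 < f.natDegree)
    (hind : AlgebraicIndependent R fun i : Fin f.natDegree => f.coeff i) :
    IndecomposablePoly f := by
  refine ⟨hf0, ?_⟩
  rintro ⟨u, g, hu, hg, rfl⟩
  obtain ⟨u₁, g₁, hu₁, hg₁, hg₁0, hdu, hdg, hcomp⟩ := hf.exists_monic_comp_eq (by omega)
  have hcard := hind.card_le_of_forall_mem_adjoin fun i =>
    hcomp ▸ coeff_comp_mem_adjoin_lowerCoeffs hu₁ hg₁ hg₁0 i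
  simp only [Fintype.card_fin, Fintype.card_sum, natDegree_comp, hdu, hdg] at hcard
  nlinarith [Nat.sub_add_cancel (one_le_two.trans hg)]

section GenericMonic

variable (d : ℕ)

theorem algebraicIndependent_genericCoeff :
    AlgebraicIndependent ℚ fun i : Fin d =>
      algebraMap (MvPolynomial (Fin d) ℚ) (GenericCoeffField d) (MvPolynomial.X i) :=
  (MvPolynomial.algebraicIndependent_X (Fin d) ℚ).map' (f := IsScalarTower.toAlgHom ℚ _ _)
    (IsFractionRing.injective _ _)

theorem degree_genericMonic_sub_X_pow_lt :
    (genericMonic d - X ^ d).degree < (d : WithBot ℕ) := by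
  rw [genericMonic, add_sub_cancel_left]
  refine (degree_sum_le _ _).trans_lt ((Finset.sup_lt_iff (WithBot.bot_lt_coe d)).2 ?_)
  intro i _
  exact (degree_C_mul_X_pow_le _ _).trans_lt
    (WithBot.coe_lt_coe.2 (by omega : d - 1 - (i : ℕ) < d))

theorem genericMonic_monic : (genericMonic d).Monic := by
  simpa using (monic_X_pow d).add_of_left
    ((degree_genericMonic_sub_X_pow_lt d).trans_eq (degree_X_pow d).symm)

theorem genericMonic_natDegree : (genericMonic d).natDegree = d := by
  rw [← add_sub_cancel (X ^ d) (genericMonic d), natDegree_add_eq_left_of_degree_lt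
    ((degree_genericMonic_sub_X_pow_lt d).trans_eq (degree_X_pow d).symm), natDegree_X_pow]

theorem genericMonic_coeff (i : Fin d) :
    (genericMonic d).coeff i =
      algebraMap (MvPolynomial (Fin d) ℚ) (GenericCoeffField d) (MvPolynomial.X i.rev) := by
  simp only [genericMonic, coeff_add, coeff_X_pow, finsetSum_coeff, coeff_C_mul_X_pow]
  rw [if_neg i.is_lt.ne, zero_add, Finset.sum_eq_single i.rev]
  · rw [if_pos (by simp only [Fin.val_rev]; omega)]
  · intro j _ hj
    exact if_neg fun h => hj (by ext; simp only [Fin.val_rev]; omega)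
  · simp

theorem algebraicIndependent_genericMonic_coeff :
    AlgebraicIndependent ℚ fun i : Fin d => (genericMonic d).coeff i := by
  simpa only [Function.comp_def, ← genericMonic_coeff] using
    (algebraicIndependent_genericCoeff d).comp Fin.rev Fin.rev_injective

end GenericMonic

theorem genericMonic_indecomposable (d : ℕ) (hd : 2 ≤ d) :
    IndecomposablePoly (genericMonic d) := by
  refine indecomposablePoly_of_algebraicIndependent_coeff (R := ℚ) (genericMonic_monic d)
    (by rw [genericMonic_natDegree]; omega) ?_
  rw [genericMonic_natDegree]
  exact algebraicIndependent_genericMonic_coeff d
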